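/- Let f : [N] → {0,1} be a Boolean function, p : [N] → [0,1] a probability distribution with p_max = max_x p(x), and let x₁,…,x_M be i.i.d. samples from p. Define the random unitary V = Π_{i=1}^M exp(i·t·f(x_i)/M · |x_i⟩⟨x_i|) and the target unitary U = Σ_x e^{i·p(x)·f(x)·t}|x⟩⟨x|. Then ‖U − E[V]‖ ≤ (t²·p_max)/(2M) in operator norm; in particular M ≥ 2·p_max·t²/ε samples guarantee ‖U − E[V]‖ ≤ ε/4. -/

import Mathlib

open Matrix

/-- Operator norm (ℓ²→ℓ² norm) of a complex matrix. -/
noncomputable def opNorm {m n : Type*} [Fintype m] [Fintype n] [DecidableEq n]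
    (A : Matrix m n ℂ) : ℝ :=
  ‖LinearMap.toContinuousLinearMap (Matrix.toEuclideanLin A)‖

/-- The target unitary `U = Σ_x e^{i·p(x)·f(x)·t}|x⟩⟨x|`. -/
noncomputable def Umat {N : ℕ} (t : ℝ) (f p : Fin N → ℝ) : Matrix (Fin N) (Fin N) ℂ :=
  Matrix.diagonal fun x => Complex.exp (Complex.I * Complex.ofReal (p x * f x * t))

/-- The random unitary resulting from the sample sequence `xs`:
`V(xs) = Π_i exp(i·t·f(x_i)/M·|x_i⟩⟨x_i|) = Σ_y e^{i·t·f(y)·m_y}|y⟩⟨y|`,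
where `m_y` is the empirical frequency of `y` among the samples. -/
noncomputable def Vmat {N M : ℕ} (t : ℝ) (f : Fin N → ℝ) (xs : Fin M → Fin N) :
    Matrix (Fin N) (Fin N) ℂ :=
  Matrix.diagonal fun y => Complex.exp (Complex.I * Complex.ofReal
    (t * f y * (((Finset.univ.filter fun i => xs i = y).card : ℝ) / M)))

/-!
`V` is diagonal with phase `t f(y) m_y` at `y`, where the empirical frequency `m_y` is a mean of
`M` i.i.d. Bernoulli(`p y`) variables. Hence each diagonal entry of `U - E[V]` has the form
`exp(i E[X]) - E[exp(i X)]` with `X = t f(y) m_y`; the Taylor bound `|e^{ix} - 1 - ix| ≤ x²/2`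
applied to `X - E[X]` bounds it by `Var[X] / 2 ≤ t² f(y)² p(y) / (2M)`, and the operator norm of a
diagonal matrix is the largest modulus of its entries.
-/

open Complex MeasureTheory ProbabilityTheory

theorem Complex.norm_exp_I_mul_ofReal_sub_one_sub_le (x : ℝ) :
    ‖cexp (I * x) - 1 - I * x‖ ≤ x ^ 2 / 2 := by
  set F : ℝ → ℂ := fun s => cexp (s * (I * x)) - 1 - s * (I * x)
  have hF : ∀ s : ℝ, HasDerivAt F (I * x * (cexp (s * (I * x)) - 1)) s := by
    intro s
    have h := (hasDerivAt_id s).ofReal_comp.mul_const (I * x)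
    simp only [id, ofReal_one, one_mul] at h
    exact ((h.cexp.sub_const 1).sub h).congr_deriv (by ring)
  have hB : ∀ s : ℝ, HasDerivAt (fun s => s ^ 2 * x ^ 2 / 2) (s * x ^ 2) s := fun s =>
    (((hasDerivAt_pow 2 s).mul_const (x ^ 2)).div_const 2).congr_deriv (by push_cast; ring)
  have hF' : ∀ s ∈ Set.Ico (0 : ℝ) 1, ‖I * x * (cexp (s * (I * x)) - 1)‖ ≤ s * x ^ 2 := by
    intro s hs
    rw [norm_mul, norm_mul, norm_I, one_mul, norm_real, mul_left_comm, ← ofReal_mul]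
    calc ‖x‖ * ‖cexp (I * ↑(s * x)) - 1‖ ≤ ‖x‖ * ‖s * x‖ := by
          gcongr; exact Real.norm_exp_I_mul_ofReal_sub_one_le
      _ = s * x ^ 2 := by
        rw [norm_mul, Real.norm_of_nonneg hs.1, Real.norm_eq_abs, ← sq_abs x]; ring
  simpa [F] using image_norm_le_of_norm_deriv_right_le_deriv_boundary
    (fun s _ => (hF s).continuousAt.continuousWithinAt) (fun s _ => (hF s).hasDerivWithinAt)
    (by simp [F]) hB hF' (Set.right_mem_Icc.mpr zero_le_one)

theorem ProbabilityTheory.norm_cexp_I_mul_integral_sub_integral_cexp_le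
    {Ω : Type*} [MeasurableSpace Ω] {μ : Measure Ω} [IsProbabilityMeasure μ] {X : Ω → ℝ}
    (hX : MemLp X 2 μ) :
    ‖cexp (I * ∫ ω, X ω ∂μ) - ∫ ω, cexp (I * X ω) ∂μ‖ ≤ Var[X; μ] / 2 := by
  set m := ∫ ω, X ω ∂μ
  have hexp : Integrable (fun ω => cexp (I * X ω)) μ := by
    refine .of_bound ?_ 1 (.of_forall fun ω => (norm_exp_I_mul_ofReal _).le)
    exact (by fun_prop : Continuous fun x : ℝ => cexp (I * x)).comp_aestronglyMeasurable
      hX.aestronglyMeasurable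
  have hcenter : Integrable (fun ω => ((X ω - m : ℝ) : ℂ)) μ :=
    ((hX.integrable one_le_two).sub (integrable_const m)).ofReal
  have hmean : ∫ ω, ((X ω - m : ℝ) : ℂ) ∂μ = 0 := by
    rw [integral_complex_ofReal, integral_sub (hX.integrable one_le_two) (integrable_const m)]
    simp [m]
  -- Since `X - m` has mean zero, the defect is the mean of a second-order Taylor remainder.
  have hdefect : cexp (I * m) - ∫ ω, cexp (I * X ω) ∂μ
      = ∫ ω, -(cexp (I * m) * (cexp (I * ↑(X ω - m)) - 1 - I * ↑(X ω - m))) ∂μ := by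
    have hsplit : ∀ ω, -(cexp (I * m) * (cexp (I * ↑(X ω - m)) - 1 - I * ↑(X ω - m)))
        = cexp (I * m) - cexp (I * X ω) + cexp (I * m) * I * ↑(X ω - m) := by
      intro ω
      have h : cexp (I * m) * cexp (I * ↑(X ω - m)) = cexp (I * X ω) := by
        rw [← Complex.exp_add]; push_cast; ring_nf
      linear_combination -h
    have hconst_sub : Integrable (fun ω => cexp (I * m) - cexp (I * X ω)) μ :=
      (integrable_const _).sub hexp
    simp_rw [hsplit]
    rw [integral_add hconst_sub (hcenter.const_mul _), integral_sub (integrable_const _) hexp,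
      integral_const_mul, hmean]
    simp
  rw [hdefect, variance_eq_integral hX.aemeasurable, ← integral_div]
  refine norm_integral_le_of_norm_le ((hX.sub (memLp_const m)).integrable_sq.div_const 2)
    (.of_forall fun ω => ?_)
  rw [norm_neg, norm_mul, norm_exp_I_mul_ofReal, one_mul]
  exact norm_exp_I_mul_ofReal_sub_one_sub_le _

theorem MeasureTheory.integral_sum_comp_eval_pi {α ι : Type*} [Fintype ι] [MeasurableSpace α]
    (μ : Measure α) [IsProbabilityMeasure μ] {g : α → ℝ} (hg : Integrable g μ) :
    ∫ xs, ∑ i, g (xs i) ∂(Measure.pi fun _ : ι => μ) = Fintype.card ι * ∫ a, g a ∂μ := by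
  rw [integral_finsetSum _ fun i _ => integrable_comp_eval hg]
  simp [integral_comp_eval (μ := fun _ : ι => μ) hg.aestronglyMeasurable]

theorem ProbabilityTheory.norm_cexp_I_mul_card_mul_integral_sub_integral_cexp_sum_le
    {α ι : Type*} [Fintype ι] [MeasurableSpace α] (μ : Measure α) [IsProbabilityMeasure μ]
    {g : α → ℝ} (hg : MemLp g 2 μ) :
    ‖cexp (I * ↑(Fintype.card ι * ∫ a, g a ∂μ))
        - ∫ xs, cexp (I * ↑(∑ i, g (xs i))) ∂(Measure.pi fun _ : ι => μ)‖
      ≤ Fintype.card ι * Var[g; μ] / 2 := by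
  have hsum : MemLp (fun xs : ι → α => ∑ i, g (xs i)) 2 (Measure.pi fun _ => μ) :=
    memLp_finsetSum _ fun i _ => hg.comp_measurePreserving (measurePreserving_eval _ i)
  have hvar : Var[fun xs : ι → α => ∑ i, g (xs i); Measure.pi fun _ => μ]
      = Fintype.card ι * Var[g; μ] := by
    simpa [Finset.sum_fn] using variance_sum_pi (μ := fun _ : ι => μ) (X := fun _ => g) fun _ => hg
  rw [← integral_sum_comp_eval_pi μ (hg.integrable one_le_two), ← hvar]
  exact norm_cexp_I_mul_integral_sub_integral_cexp_le hsum

section FiniteWeights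

variable {α : Type*} [Fintype α]

noncomputable def PMF.ofFintypeReal (p : α → ℝ) (hp : ∀ a, 0 ≤ p a) (hps : ∑ a, p a = 1) :
    PMF α :=
  PMF.ofFintype (fun a => ENNReal.ofReal (p a)) <| by
    rw [← ENNReal.ofReal_sum_of_nonneg fun a _ => hp a, hps, ENNReal.ofReal_one]

theorem PMF.toMeasure_ofFintypeReal_real_singleton [MeasurableSpace α]
    [MeasurableSingletonClass α] {p : α → ℝ} (hp : ∀ a, 0 ≤ p a) (hps : ∑ a, p a = 1) (a : α) :
    (PMF.ofFintypeReal p hp hps).toMeasure.real {a} = p a := by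
  rw [Measure.real, PMF.toMeasure_apply_singleton _ _ (measurableSet_singleton a)]
  simp [PMF.ofFintypeReal, hp a]

theorem MeasureTheory.integral_pi_eq_sum {ι E : Type*} [Fintype ι] [DecidableEq ι]
    [MeasurableSpace α] [MeasurableSingletonClass α] [NormedAddCommGroup E] [NormedSpace ℝ E]
    [CompleteSpace E] (μ : Measure α) [IsFiniteMeasure μ] (F : (ι → α) → E) :
    ∫ xs, F xs ∂(Measure.pi fun _ => μ) = ∑ xs, (∏ i, μ.real {xs i}) • F xs := by
  rw [integral_fintype .of_finite]
  simp [Measure.real, Measure.pi_singleton, ENNReal.toReal_prod]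

end FiniteWeights

theorem norm_cexp_sub_sum_prod_mul_cexp_count_le {α ι : Type*} [Fintype α] [DecidableEq α]
    [Fintype ι] [DecidableEq ι] [Nonempty ι] {p : α → ℝ} (hp : ∀ a, 0 ≤ p a)
    (hps : ∑ a, p a = 1) (t s : ℝ) (y : α) :
    ‖cexp (I * ↑(p y * s * t)) - ∑ xs : ι → α, ↑(∏ i, p (xs i))
        * cexp (I * ↑(t * s * ((Finset.univ.filter fun i => xs i = y).card / Fintype.card ι)))‖
      ≤ t ^ 2 * s ^ 2 * p y / (2 * Fintype.card ι) := by
  let _ : MeasurableSpace α := ⊤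
  have : DiscreteMeasurableSpace α := ⟨fun _ => trivial⟩
  set μ := (PMF.ofFintypeReal p hp hps).toMeasure
  have hμ : ∀ (g : α → ℝ), ∫ a, g a ∂μ = ∑ a, p a * g a := fun g => by
    simp [integral_fintype .of_finite, μ, PMF.toMeasure_ofFintypeReal_real_singleton]
  have hcard : (0 : ℝ) < Fintype.card ι := by exact_mod_cast Fintype.card_pos
  set g : α → ℝ := fun a => if a = y then t * s / Fintype.card ι else 0
  have hmean : Fintype.card ι * ∫ a, g a ∂μ = p y * s * t := by
    rw [hμ]; simp [g]; field_simp
  have hvar : Var[g; μ] ≤ p y * (t * s / Fintype.card ι) ^ 2 := by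
    refine (variance_le_expectation_sq .of_discrete).trans_eq ?_
    rw [hμ]; simp [g]
  have hphase : ∀ xs : ι → α, ∑ i, g (xs i)
      = t * s * ((Finset.univ.filter fun i => xs i = y).card / Fintype.card ι) := by
    intro xs
    rw [← Finset.sum_filter]; simp; field_simp
  have hsample : ∫ xs, cexp (I * ↑(∑ i, g (xs i))) ∂(Measure.pi fun _ : ι => μ)
      = ∑ xs : ι → α, ↑(∏ i, p (xs i))
        * cexp (I * ↑(t * s * ((Finset.univ.filter fun i => xs i = y).card / Fintype.card ι))) := by
    simp [integral_pi_eq_sum, μ, PMF.toMeasure_ofFintypeReal_real_singleton, hphase]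
  calc _ = ‖cexp (I * ↑(Fintype.card ι * ∫ a, g a ∂μ))
        - ∫ xs, cexp (I * ↑(∑ i, g (xs i))) ∂(Measure.pi fun _ : ι => μ)‖ := by
        rw [hmean, hsample]
    _ ≤ Fintype.card ι * Var[g; μ] / 2 :=
        norm_cexp_I_mul_card_mul_integral_sub_integral_cexp_sum_le μ (.of_discrete)
    _ ≤ Fintype.card ι * (p y * (t * s / Fintype.card ι) ^ 2) / 2 := by gcongr
    _ = t ^ 2 * s ^ 2 * p y / (2 * Fintype.card ι) := by field_simp

theorem opNorm_diagonal {n : Type*} [Fintype n] [DecidableEq n] (d : n → ℂ) :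
    opNorm (diagonal d) = ‖d‖ := by
  open scoped Matrix.Norms.L2Operator in exact l2_opNorm_diagonal d

theorem Umat_sub_sum_smul_Vmat {N M : ℕ} (t : ℝ) (f p : Fin N → ℝ)
    (w : (Fin M → Fin N) → ℂ) :
    Umat t f p - ∑ xs, w xs • Vmat t f xs = diagonal fun y => cexp (I * ↑(p y * f y * t))
      - ∑ xs, w xs * cexp (I * ↑(t * f y * ((Finset.univ.filter fun i => xs i = y).card / M))) := by
  ext i j
  rcases eq_or_ne i j with rfl | hij
  · simp [Umat, Vmat, Matrix.sum_apply]
  · simp [Umat, Vmat, Matrix.sum_apply, hij]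

theorem stmt4 {N M : ℕ} (hM : 0 < M) (t : ℝ)
    (f : Fin N → ℝ) (hf : ∀ x, f x = 0 ∨ f x = 1)
    (p : Fin N → ℝ) (hp : ∀ x, 0 ≤ p x) (hps : ∑ x, p x = 1) :
    opNorm (Umat t f p
        - ∑ xs : Fin M → Fin N, (Complex.ofReal (∏ i, p (xs i))) • Vmat t f xs)
      ≤ t ^ 2 * (⨆ x, p x) / (2 * M) ∧
    ∀ ε : ℝ, 0 < ε → 2 * (⨆ x, p x) * t ^ 2 / ε ≤ M →
      opNorm (Umat t f p
          - ∑ xs : Fin M → Fin N, (Complex.ofReal (∏ i, p (xs i))) • Vmat t f xs)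
        ≤ ε / 4 := by
  have : Nonempty (Fin M) := Fin.pos_iff_nonempty.mp hM
  have hpmax : 0 ≤ ⨆ x, p x := Real.iSup_nonneg hp
  have hbound : opNorm (Umat t f p
      - ∑ xs : Fin M → Fin N, (Complex.ofReal (∏ i, p (xs i))) • Vmat t f xs)
        ≤ t ^ 2 * (⨆ x, p x) / (2 * M) := by
    rw [Umat_sub_sum_smul_Vmat, opNorm_diagonal]
    refine (pi_norm_le_iff_of_nonneg (by positivity)).mpr fun y => ?_
    have hfy : f y ^ 2 ≤ 1 := by rcases hf y with h | h <;> simp [h]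
    have hpy : p y ≤ ⨆ x, p x := le_ciSup (Finite.bddAbove_range p) y
    calc _ ≤ t ^ 2 * f y ^ 2 * p y / (2 * M) := by
          simpa using norm_cexp_sub_sum_prod_mul_cexp_count_le (ι := Fin M) hp hps t (f y) y
      _ ≤ t ^ 2 * (1 * ⨆ x, p x) / (2 * M) := by
          rw [mul_assoc]; gcongr; exact hp y
      _ = t ^ 2 * (⨆ x, p x) / (2 * M) := by rw [one_mul]
  refine ⟨hbound, fun ε hε hMε => hbound.trans ?_⟩
  rw [div_le_iff₀ hε] at hMε
  rw [div_le_iff₀ (by positivity)]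
  linarith
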